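/- Let k ∈ ℝ, define c_k(t) = cos(√k t) for k > 0, cosh(√(-k) t) for k < 0, and 1 for k = 0; similarly s_k(t) = sin(√k t)/√k, sinh(√(-k) t)/√(-k), or t. Let ct_k = c_k/s_k and let I be an open subinterval of (0, l), with l ≤ π/√k if k > 0. If φ : I → ℝ is C² and satisfies φ'' + k φ ≥ 0 on I, then the function y ↦ √(k + y²)·φ(ct_k⁻¹(y)) is convex on ct_k(I). -/

import Mathlib

/-- Generalized cosine `c_k`. -/
noncomputable def ck (k t : ℝ) : ℝ :=
  if k = 0 then 1
  else if 0 < k then Real.cos (Real.sqrt k * t)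
  else Real.cosh (Real.sqrt (-k) * t)

/-- Generalized sine `s_k`. -/
noncomputable def sk (k t : ℝ) : ℝ :=
  if k = 0 then t
  else if 0 < k then Real.sin (Real.sqrt k * t) / Real.sqrt k
  else Real.sinh (Real.sqrt (-k) * t) / Real.sqrt (-k)

/-- Generalized cotangent `ct_k = c_k/s_k`. -/
noncomputable def ctk (k t : ℝ) : ℝ := ck k t / sk k t

/-!
Substituting `y = ct_k x`, for which `dy/dx = -1/s_k²` and `√(k + y²) = 1/s_k`, turns the
function into `x ↦ φ x / s_k x`. Differentiating twice through the substitution gives first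
derivative `φ c_k - φ' s_k` and second derivative `s_k³ (φ'' + k φ)`, which is nonnegative
because `s_k > 0` on `(0, l)`.
-/

open Real Set Filter Topology

section InverseOfStrictAnti

variable {u : ℝ → ℝ} {s : Set ℝ} {x : ℝ}

theorem StrictAntiOn.image_mem_nhds_of_isOpen (hanti : StrictAntiOn u s) (hs : IsOpen s)
    (hu : ContinuousOn u s) (hx : x ∈ s) : u '' s ∈ 𝓝 (u x) := by
  obtain ⟨ε, hε, hball⟩ := Metric.isOpen_iff.1 hs x hx
  have hIcc : Icc (x - ε / 2) (x + ε / 2) ⊆ s := fun z hz =>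
    hball (by rw [Real.ball_eq_Ioo]; exact ⟨by linarith [hz.1], by linarith [hz.2]⟩)
  have hleft : x - ε / 2 ∈ s := hIcc ⟨le_rfl, by linarith⟩
  have hright : x + ε / 2 ∈ s := hIcc ⟨by linarith, le_rfl⟩
  refine mem_of_superset (Icc_mem_nhds (hanti hx hright (by linarith))
    (hanti hleft hx (by linarith))) ?_
  exact (intermediate_value_Icc' (by linarith) (hu.mono hIcc)).trans (image_mono hIcc)

theorem StrictAntiOn.continuousAt_invFunOn (hanti : StrictAntiOn u s) (hs : IsOpen s)
    (hu : ContinuousOn u s) (hx : x ∈ s) : ContinuousAt (Function.invFunOn u s) (u x) := by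
  intro t ht
  rw [hanti.injOn.leftInvOn_invFunOn hx] at ht
  obtain ⟨V, hVt, hV, hxV⟩ := mem_nhds_iff.1 ht
  refine mem_map.2 <| mem_of_superset ((hanti.mono inter_subset_left).image_mem_nhds_of_isOpen
    (hs.inter hV) (hu.mono inter_subset_left) ⟨hx, hxV⟩) ?_
  rintro _ ⟨z, ⟨hzs, hzV⟩, rfl⟩
  exact hVt (by rwa [hanti.injOn.leftInvOn_invFunOn hzs])

theorem StrictAntiOn.hasDerivAt_of_forall_comp_eq (hanti : StrictAntiOn u s) (hs : IsOpen s)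
    (hu : ContinuousOn u s) (hx : x ∈ s) {u' : ℝ} (hu' : HasDerivAt u u' x) (hu'0 : u' ≠ 0)
    {F G : ℝ → ℝ} {G' : ℝ} (hFG : ∀ z ∈ s, F (u z) = G z) (hG : HasDerivAt G G' x) :
    HasDerivAt F (G' / u') (u x) := by
  set g := Function.invFunOn u s
  have hleft : ∀ z ∈ s, g (u z) = z := fun z hz => hanti.injOn.leftInvOn_invFunOn hz
  have himage := hanti.image_mem_nhds_of_isOpen hs hu hx
  have hg : HasDerivAt g u'⁻¹ (u x) := by
    refine HasDerivAt.of_local_left_inverse (hanti.continuousAt_invFunOn hs hu hx)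
      (by rwa [hleft x hx]) hu'0 ?_
    filter_upwards [himage] with y hy using Function.invFunOn_eq hy
  have hGg : HasDerivAt (G ∘ g) (G' * u'⁻¹) (u x) := (hleft x hx ▸ hG).comp (u x) hg
  refine div_eq_mul_inv G' u' ▸ hGg.congr_of_eventuallyEq ?_
  filter_upwards [himage] with _ ⟨z, hz, hzy⟩
  rw [← hzy, Function.comp_apply, hleft z hz, hFG z hz]

end InverseOfStrictAnti

theorem ContDiffOn.hasDerivAt_deriv_of_isOpen {f : ℝ → ℝ} {s : Set ℝ} {n : WithTop ℕ∞}
    {x : ℝ} (hf : ContDiffOn ℝ n f s) (hn : n ≠ 0) (hs : IsOpen s) (hx : x ∈ s) :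
    HasDerivAt f (deriv f x) x :=
  ((hf.differentiableOn hn x hx).differentiableAt (hs.mem_nhds hx)).hasDerivAt

theorem convexOn_image_of_hasDerivAt_deriv {u F F'' : ℝ → ℝ} {s : Set ℝ}
    (hconv : Convex ℝ (u '' s)) (hF : ∀ x ∈ s, DifferentiableAt ℝ F (u x))
    (hF'' : ∀ x ∈ s, HasDerivAt (deriv F) (F'' x) (u x))
    (hF''_nonneg : ∀ x ∈ s, 0 ≤ F'' x) :
    ConvexOn ℝ (u '' s) F := by
  refine convexOn_of_deriv2_nonneg' hconv ?_ ?_ ?_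
  · rintro _ ⟨x, hx, rfl⟩
    exact (hF x hx).differentiableWithinAt
  · rintro _ ⟨x, hx, rfl⟩
    exact (hF'' x hx).differentiableAt.differentiableWithinAt
  · rintro _ ⟨x, hx, rfl⟩
    rw [Function.iterate_succ_apply, Function.iterate_one, (hF'' x hx).deriv]
    exact hF''_nonneg x hx

theorem hasDerivAt_sk (k x : ℝ) : HasDerivAt (sk k) (ck k x) x := by
  unfold sk ck
  rcases lt_trichotomy k 0 with hk | rfl | hk
  · have hr : √(-k) ≠ 0 := (sqrt_pos.2 (neg_pos.2 hk)).ne'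
    simp only [hk.ne, hk.not_gt, if_false]
    exact (((hasDerivAt_id' x).const_mul √(-k)).sinh.div_const √(-k)).congr_deriv
      (by field_simp)
  · simpa using hasDerivAt_id' x
  · have hr : √k ≠ 0 := (sqrt_pos.2 hk).ne'
    simp only [hk.ne', hk, if_false, if_true]
    exact (((hasDerivAt_id' x).const_mul √k).sin.div_const √k).congr_deriv (by field_simp)

theorem hasDerivAt_ck (k x : ℝ) : HasDerivAt (ck k) (-(k * sk k x)) x := by
  unfold sk ck
  rcases lt_trichotomy k 0 with hk | rfl | hk
  · have hr : √(-k) ≠ 0 := (sqrt_pos.2 (neg_pos.2 hk)).ne'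
    have hsq : √(-k) ^ 2 = -k := sq_sqrt (neg_nonneg.2 hk.le)
    simp only [hk.ne, hk.not_gt, if_false]
    refine ((hasDerivAt_id' x).const_mul √(-k)).cosh.congr_deriv ?_
    field_simp
    linear_combination sinh (√(-k) * x) * hsq
  · simpa using hasDerivAt_const x (1 : ℝ)
  · have hr : √k ≠ 0 := (sqrt_pos.2 hk).ne'
    have hsq : √k ^ 2 = k := sq_sqrt hk.le
    simp only [hk.ne', hk, if_false, if_true]
    refine ((hasDerivAt_id' x).const_mul √k).cos.congr_deriv ?_
    field_simp
    linear_combination -sin (√k * x) * hsq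

theorem ck_sq_add_mul_sk_sq (k x : ℝ) : ck k x ^ 2 + k * sk k x ^ 2 = 1 := by
  unfold sk ck
  rcases lt_trichotomy k 0 with hk | rfl | hk
  · have hr : √(-k) ≠ 0 := (sqrt_pos.2 (neg_pos.2 hk)).ne'
    have hsq : √(-k) ^ 2 = -k := sq_sqrt (neg_nonneg.2 hk.le)
    simp only [hk.ne, hk.not_gt, if_false]
    field_simp
    linear_combination (cosh (√(-k) * x) ^ 2 - 1) * hsq
      - k * cosh_sq_sub_sinh_sq (√(-k) * x)
  · simp
  · have hr : √k ≠ 0 := (sqrt_pos.2 hk).ne'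
    have hsq : √k ^ 2 = k := sq_sqrt hk.le
    simp only [hk.ne', hk, if_false, if_true]
    field_simp
    linear_combination (cos (√k * x) ^ 2 - 1) * hsq
      + k * sin_sq_add_cos_sq (√k * x)

section GeneralizedTrigonometric

variable {k l : ℝ}

/-- For `k > 0` the bound `l ≤ π / √k` keeps `√k x` inside `(0, π)`, where `sin` is
positive. -/
theorem sk_pos (hlk : 0 < k → l ≤ π / √k) {x : ℝ} (hx : x ∈ Ioo 0 l) : 0 < sk k x := by
  unfold sk
  rcases lt_trichotomy k 0 with hk | rfl | hk
  · have hr : 0 < √(-k) := sqrt_pos.2 (neg_pos.2 hk)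
    simp only [hk.ne, hk.not_gt, if_false]
    exact div_pos (sinh_pos_iff.2 (mul_pos hr hx.1)) hr
  · simpa using hx.1
  · have hr : 0 < √k := sqrt_pos.2 hk
    simp only [hk.ne', hk, if_false, if_true]
    refine div_pos (sin_pos_of_pos_of_lt_pi (mul_pos hr hx.1) ?_) hr
    calc √k * x < √k * l := mul_lt_mul_of_pos_left hx.2 hr
      _ ≤ √k * (π / √k) := mul_le_mul_of_nonneg_left (hlk hk) hr.le
      _ = π := by field_simp

theorem hasDerivAt_ctk {x : ℝ} (hx : sk k x ≠ 0) :
    HasDerivAt (ctk k) (-(sk k x ^ 2)⁻¹) x := by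
  refine ((hasDerivAt_ck k x).div (hasDerivAt_sk k x) hx).congr_deriv ?_
  field_simp
  linear_combination -ck_sq_add_mul_sk_sq k x

theorem sqrt_add_ctk_sq {x : ℝ} (hx : 0 < sk k x) : √(k + ctk k x ^ 2) = (sk k x)⁻¹ := by
  rw [← sqrt_sq (inv_nonneg.2 hx.le), ctk]
  congr 1
  field_simp
  linear_combination ck_sq_add_mul_sk_sq k x

theorem continuousOn_ctk (hlk : 0 < k → l ≤ π / √k) : ContinuousOn (ctk k) (Ioo 0 l) :=
  fun _ hx => (hasDerivAt_ctk (sk_pos hlk hx).ne').continuousAt.continuousWithinAt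

theorem strictAntiOn_ctk (hlk : 0 < k → l ≤ π / √k) : StrictAntiOn (ctk k) (Ioo 0 l) := by
  refine strictAntiOn_of_deriv_neg (convex_Ioo 0 l) (continuousOn_ctk hlk) fun x hx => ?_
  rw [interior_Ioo] at hx
  have := sk_pos hlk hx
  rw [(hasDerivAt_ctk this.ne').deriv, neg_lt_zero]
  positivity

theorem hasDerivAt_of_forall_comp_ctk_eq {a b x : ℝ} (hlk : 0 < k → l ≤ π / √k)
    (hab : Ioo a b ⊆ Ioo 0 l) (hx : x ∈ Ioo a b) {F G : ℝ → ℝ} {G' : ℝ}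
    (hFG : ∀ z ∈ Ioo a b, F (ctk k z) = G z) (hG : HasDerivAt G G' x) :
    HasDerivAt F (-(sk k x ^ 2 * G')) (ctk k x) := by
  have hsk := sk_pos hlk (hab hx)
  refine ((strictAntiOn_ctk hlk).mono hab |>.hasDerivAt_of_forall_comp_eq isOpen_Ioo
    ((continuousOn_ctk hlk).mono hab) hx (hasDerivAt_ctk hsk.ne')
    (neg_ne_zero.2 (by positivity)) hFG hG).congr_deriv ?_
  field_simp

end GeneralizedTrigonometric

theorem stmt_8_general (k l : ℝ) (hlk : 0 < k → l ≤ Real.pi / Real.sqrt k)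
    (a b : ℝ) (hab : Set.Ioo a b ⊆ Set.Ioo 0 l)
    (φ : ℝ → ℝ) (hφ : ContDiffOn ℝ 2 φ (Set.Ioo a b))
    (hconv : ∀ x ∈ Set.Ioo a b, 0 ≤ deriv (deriv φ) x + k * φ x) :
    ConvexOn ℝ (ctk k '' Set.Ioo a b)
      (fun y => Real.sqrt (k + y ^ 2) *
        φ (Function.invFunOn (ctk k) (Set.Ioo a b) y)) := by
  set F := fun y => √(k + y ^ 2) * φ (Function.invFunOn (ctk k) (Ioo a b) y)
  have hsk : ∀ x ∈ Ioo a b, 0 < sk k x := fun x hx => sk_pos hlk (hab hx)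
  have hφ' : ∀ x ∈ Ioo a b, HasDerivAt φ (deriv φ x) x := fun x hx =>
    hφ.hasDerivAt_deriv_of_isOpen two_ne_zero isOpen_Ioo hx
  have hφ'' : ∀ x ∈ Ioo a b, HasDerivAt (deriv φ) (deriv (deriv φ) x) x := fun x hx =>
    ((contDiffOn_succ_iff_deriv_of_isOpen (n := 1) isOpen_Ioo).1 hφ).2.2.hasDerivAt_deriv_of_isOpen
      one_ne_zero isOpen_Ioo hx
  have hF : ∀ x ∈ Ioo a b, F (ctk k x) = φ x / sk k x := fun x hx => by
    simp only [F, sqrt_add_ctk_sq (hsk x hx),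
      ((strictAntiOn_ctk hlk).mono hab).injOn.leftInvOn_invFunOn hx, inv_mul_eq_div]
  have hF' : ∀ x ∈ Ioo a b,
      HasDerivAt F (φ x * ck k x - deriv φ x * sk k x) (ctk k x) := fun x hx =>
    (hasDerivAt_of_forall_comp_ctk_eq hlk hab hx hF
      ((hφ' x hx).div (hasDerivAt_sk k x) (hsk x hx).ne')).congr_deriv
      (by field_simp [(hsk x hx).ne']; ring)
  have hF'' : ∀ x ∈ Ioo a b,
      HasDerivAt (deriv F) (sk k x ^ 3 * (deriv (deriv φ) x + k * φ x)) (ctk k x) :=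
    fun x hx => (hasDerivAt_of_forall_comp_ctk_eq hlk hab hx (fun z hz => (hF' z hz).deriv)
      (((hφ' x hx).mul (hasDerivAt_ck k x)).sub
        ((hφ'' x hx).mul (hasDerivAt_sk k x)))).congr_deriv (by ring)
  exact convexOn_image_of_hasDerivAt_deriv
    (convex_iff_isPreconnected.2 (isPreconnected_Ioo.image _ ((continuousOn_ctk hlk).mono hab)))
    (fun x hx => (hF' x hx).differentiableAt) hF''
    fun x hx => mul_nonneg (pow_nonneg (hsk x hx).le 3) (hconv x hx)

/-- If `φ` is `C²` on an open subinterval `I` of `(0, l)` (with `l ≤ π/√k`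
when `k > 0`) and satisfies `φ'' + kφ ≥ 0` on `I`, then
`y ↦ √(k + y²)·φ(ct_k⁻¹(y))` is convex on `ct_k(I)`. -/
theorem stmt_8 (k l : ℝ) (hl : 0 < l) (hlk : 0 < k → l ≤ Real.pi / Real.sqrt k)
    (a b : ℝ) (hab : Set.Ioo a b ⊆ Set.Ioo 0 l)
    (φ : ℝ → ℝ) (hφ : ContDiffOn ℝ 2 φ (Set.Ioo a b))
    (hconv : ∀ x ∈ Set.Ioo a b, 0 ≤ deriv (deriv φ) x + k * φ x) :
    ConvexOn ℝ (ctk k '' Set.Ioo a b)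
      (fun y => Real.sqrt (k + y ^ 2) *
        φ (Function.invFunOn (ctk k) (Set.Ioo a b) y)) :=
  stmt_8_general k l hlk a b hab φ hφ hconv
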